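/- Let (Y_t)_{t>0} be a family of random variables such that lim_{t→∞} (1/t) log E[exp(λ |Y_t|^{1/2})] = (λ/√2)^{2β/(2β−d)} M for every λ > 0, where d/2 < β ≤ d and M > 0. Then lim_{t→∞} (1/t) log P(|Y_t| ≥ t^2) = − sup_{λ>0} { λ − (λ/√2)^{2β/(2β−d)} M } = −2^{β/d − 1} (d/β) ((2β − d)/(2β M))^{(2β−d)/d}. -/

import Mathlib

set_option maxHeartbeats 1000000

open MeasureTheory Filter Set

section Aux

open Real

lemma aux_legendre_bound {c q L : ℝ} (hc : 0 < c) (hq : 1 < q)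
    (hLpos : 0 < L) (hL : c * L ^ (q-1) = 1/q) :
    ∀ x : ℝ, 0 < x → x - c * x ^ q ≤ L - c * L ^ q := by
  intro x hx
  have hq0 : 0 < q := by linarith
  set u := x / L with hu
  have hupos : 0 < u := div_pos hx hLpos
  have hxu : x = L * u := by rw [hu]; field_simp
  have hb : 1 + q * (u - 1) ≤ u ^ q := by
    have := one_add_mul_self_le_rpow_one_add (by linarith : (-1:ℝ) ≤ u - 1) hq.le
    simpa using this
  have hLq : c * L ^ q = L / q := by
    have : L ^ q = L ^ (q-1) * L := by
      rw [← Real.rpow_add_one hLpos.ne' (q-1)]; ring_nf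
    rw [this]
    have := hL
    field_simp at this ⊢
    nlinarith [this]
  rw [hxu, Real.mul_rpow hLpos.le hupos.le, ← mul_assoc, hLq]
  have h2 : (L / q) * (1 + q * (u - 1)) ≤ (L / q) * u ^ q :=
    mul_le_mul_of_nonneg_left hb (by positivity)
  have h3 : (L / q) * (1 + q * (u - 1)) = L / q + L * (u - 1) := by
    field_simp
  -- goal : L * u - L / q * u ^ q ≤ L - L / q
  nlinarith [h2, h3]

lemma aux_legendre_value {β D M c q L : ℝ} (hD : 0 < D) (hβl : D/2 < β) (hM : 0 < M)
    (hq : q = 2*β/(2*β - D)) (hc : c = M / Real.sqrt 2 ^ q)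
    (hL : L = (1/(c*q)) ^ (1/(q-1))) :
    L - c * L ^ q
      = 2 ^ (β/D - 1) * (D/β) * ((2*β - D)/(2*β*M)) ^ ((2*β - D)/D) := by
  have hβ : 0 < β := by linarith
  have hT : 0 < 2*β - D := by linarith
  have hq1 : 1 < q := by rw [hq, lt_div_iff₀ hT]; linarith
  have hq0 : 0 < q := by linarith
  have hs2 : (0:ℝ) < Real.sqrt 2 := Real.sqrt_pos.2 (by norm_num)
  have hcpos : 0 < c := by rw [hc]; positivity
  have hLpos : 0 < L := by rw [hL]; positivity
  have hkey : c * L ^ (q-1) = 1/q := by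
    rw [hL, ← Real.rpow_mul (by positivity), one_div (q-1),
      inv_mul_cancel₀ (by linarith : q - 1 ≠ 0), Real.rpow_one]
    field_simp
  have hLq : c * L ^ q = L / q := by
    have h1 : L ^ q = L ^ (q-1) * L := by
      rw [← Real.rpow_add_one hLpos.ne' (q-1)]; ring_nf
    rw [h1, ← mul_assoc, hkey]; ring
  have hval : L - c * L ^ q = L * ((q-1)/q) := by rw [hLq]; field_simp
  rw [hval]
  have hRpos : (0:ℝ) < 2 ^ (β/D - 1) * (D/β) * ((2*β - D)/(2*β*M)) ^ ((2*β - D)/D) := by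
    positivity
  have hLHSpos : 0 < L * ((q-1)/q) := by
    apply mul_pos hLpos; apply div_pos (by linarith) hq0
  apply Real.log_injOn_pos (Set.mem_Ioi.2 hLHSpos) (Set.mem_Ioi.2 hRpos)
  -- compute both logs
  have hlogc : Real.log c = Real.log M - q * (Real.log 2 / 2) := by
    rw [hc, Real.log_div hM.ne' (by positivity), Real.log_rpow hs2,
      Real.log_sqrt (by norm_num)]
  have hlogL : Real.log L = (1/(q-1)) * (-(Real.log c + Real.log q)) := by
    rw [hL, Real.log_rpow (by positivity), one_div (c*q), Real.log_inv,
      Real.log_mul hcpos.ne' hq0.ne']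
  have hlogq : Real.log q = Real.log 2 + Real.log β - Real.log (2*β - D) := by
    rw [hq, Real.log_div (by positivity) hT.ne', Real.log_mul two_ne_zero hβ.ne']
  have hqm1 : q - 1 = D/(2*β - D) := by rw [hq]; field_simp; ring
  have hlogqm1 : Real.log (q-1) = Real.log D - Real.log (2*β - D) := by
    rw [hqm1, Real.log_div hD.ne' hT.ne']
  rw [Real.log_mul hLpos.ne' (ne_of_gt (div_pos (by linarith) hq0)),
    Real.log_div (by linarith : q - 1 ≠ 0) hq0.ne', hlogL, hlogc, hlogq, hlogqm1,
    Real.log_mul (by positivity : (2:ℝ)^(β/D-1) * (D/β) ≠ 0) (by positivity),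
    Real.log_mul (by positivity : ((2:ℝ)^(β/D-1)) ≠ 0) (by positivity),
    Real.log_rpow two_pos, Real.log_rpow (by positivity : 0 < (2*β-D)/(2*β*M)),
    Real.log_div hD.ne' hβ.ne',
    Real.log_div hT.ne' (by positivity : 2*β*M ≠ 0),
    Real.log_mul (by positivity : 2*β ≠ 0) hM.ne',
    Real.log_mul two_ne_zero hβ.ne', hq]
  have h1 : 2*β/(2*β - D) - 1 = D / (2*β - D) := by field_simp; ring
  rw [h1]
  field_simp
  ring

variable {Ω : Type*} [MeasurableSpace Ω]

-- eventual integrability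
lemma aux_int (P : Measure Ω) [IsProbabilityMeasure P] {c q : ℝ} (hc : 0 < c)
    (Z : ℝ → Ω → ℝ) {lam : ℝ} (hlam : 0 < lam)
    (h : Tendsto (fun t : ℝ => (1/t) * Real.log (∫ ω, Real.exp (lam * Z t ω) ∂P))
      atTop (nhds (c * lam ^ q))) :
    ∀ᶠ t : ℝ in atTop, Integrable (fun ω => Real.exp (lam * Z t ω)) P ∧
      1 < ∫ ω, Real.exp (lam * Z t ω) ∂P := by
  have hpos : 0 < c * lam ^ q := mul_pos hc (Real.rpow_pos_of_pos hlam q)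
  filter_upwards [h.eventually (eventually_gt_nhds hpos), eventually_gt_atTop (0:ℝ)]
    with t h1 ht
  have hlog : 0 < Real.log (∫ ω, Real.exp (lam * Z t ω) ∂P) := by
    have heq : Real.log (∫ ω, Real.exp (lam * Z t ω) ∂P)
        = t * ((1/t) * Real.log (∫ ω, Real.exp (lam * Z t ω) ∂P)) := by
      field_simp
    rw [heq]; exact mul_pos ht h1
  have hInt : Integrable (fun ω => Real.exp (lam * Z t ω)) P := by
    by_contra hni
    rw [integral_undef hni, Real.log_zero] at hlog
    exact lt_irrefl 0 hlog
  refine ⟨hInt, ?_⟩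
  by_contra hle
  push_neg at hle
  have h0 : 0 ≤ ∫ ω, Real.exp (lam * Z t ω) ∂P :=
    integral_nonneg fun ω => (Real.exp_pos _).le
  exact absurd (Real.log_nonpos h0 hle) (not_le.2 hlog)

lemma aux_slope {f : ℝ → ℝ} {f' : ℝ} (hf : HasDerivAt f f' 0) (hf0 : f 0 = 0)
    (hf' : 0 < f') {b : ℝ} (hb : 0 < b) : ∃ θ ∈ Ioo (0:ℝ) b, 0 < f θ := by
  rw [hasDerivAt_iff_tendsto_slope] at hf
  have h1 : ∀ᶠ θ in nhdsWithin 0 {(0:ℝ)}ᶜ, 0 < slope f 0 θ :=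
    hf.eventually (eventually_gt_nhds hf')
  have hmono : nhdsWithin (0:ℝ) (Ioi 0) ≤ nhdsWithin 0 {(0:ℝ)}ᶜ :=
    nhdsWithin_mono 0 (fun x hx => ne_of_gt hx)
  have h2 : ∀ᶠ θ in nhdsWithin (0:ℝ) (Ioi 0), θ ∈ Ioo 0 b :=
    eventually_of_mem (Ioo_mem_nhdsGT hb) fun x hx => hx
  obtain ⟨θ, hsl, hθ⟩ := ((h1.filter_mono hmono).and h2).exists
  refine ⟨θ, hθ, ?_⟩
  have hθ0 : 0 < θ := hθ.1
  have : slope f 0 θ = f θ / θ := by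
    rw [slope_def_field]; rw [hf0]; ring_nf
  rw [this] at hsl
  have := mul_pos hθ0 hsl
  rwa [mul_div_cancel₀ _ hθ0.ne'] at this

lemma aux_chernoff (P : Measure Ω) [IsProbabilityMeasure P] {Z : Ω → ℝ} {lam t : ℝ}
    (hlam : 0 < lam) (ht : 0 < t)
    (hInt : Integrable (fun ω => Real.exp (lam * Z ω)) P)
    (hI : 1 < ∫ ω, Real.exp (lam * Z ω) ∂P)
    (hP : 0 < (P {ω | t ≤ Z ω}).toReal) :
    (1/t) * Real.log (P {ω | t ≤ Z ω}).toReal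
      ≤ -lam + (1/t) * Real.log (∫ ω, Real.exp (lam * Z ω) ∂P) := by
  have hch := ProbabilityTheory.measure_ge_le_exp_mul_mgf (X := Z) (μ := P) t hlam.le hInt
  rw [ProbabilityTheory.mgf] at hch
  have h1 := Real.log_le_log hP hch
  rw [Real.log_mul (Real.exp_ne_zero _) (by linarith), Real.log_exp] at h1
  have h2 := mul_le_mul_of_nonneg_left h1 (by positivity : (0:ℝ) ≤ 1/t)
  calc (1/t) * Real.log (P {ω | t ≤ Z ω}).toReal
      ≤ (1/t) * (-lam * t + Real.log (∫ ω, Real.exp (lam * Z ω) ∂P)) := h2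
    _ = -lam + (1/t) * Real.log (∫ ω, Real.exp (lam * Z ω) ∂P) := by
        field_simp

lemma aux_lower_t (P : Measure Ω) [IsProbabilityMeasure P] {Z : Ω → ℝ} (hZm : Measurable Z)
    {lam1 θ θ' δ t : ℝ}
    (hlam1 : 0 < lam1) (hθ : θ ∈ Ioo 0 lam1) (hθ' : 0 < θ') (hδ : 0 < δ) (ht : 0 < t)
    (hIntA : Integrable (fun ω => Real.exp (lam1 * Z ω)) P)
    (hIntB : Integrable (fun ω => Real.exp ((lam1-θ) * Z ω)) P)
    (hIntC : Integrable (fun ω => Real.exp ((lam1+θ') * Z ω)) P)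
    (hBsmall : Real.exp (θ*t) * ∫ ω, Real.exp ((lam1-θ)*Z ω) ∂P
      ≤ (∫ ω, Real.exp (lam1*Z ω) ∂P)/4)
    (hCsmall : Real.exp (-θ'*(1+δ)*t) * ∫ ω, Real.exp ((lam1+θ')*Z ω) ∂P
      ≤ (∫ ω, Real.exp (lam1*Z ω) ∂P)/4) :
    (∫ ω, Real.exp (lam1 * Z ω) ∂P) / 2
      ≤ Real.exp (lam1*(1+δ)*t) * (P {ω | t ≤ Z ω}).toReal := by
  set A := ∫ ω, Real.exp (lam1 * Z ω) ∂P with hA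
  set Sm : Set Ω := {ω | t ≤ Z ω} ∩ {ω | Z ω < (1+δ)*t} with hSmdef
  have hSm : MeasurableSet Sm :=
    (measurableSet_le measurable_const hZm).inter (measurableSet_lt hZm measurable_const)
  set g : Ω → ℝ := fun ω => Real.exp (θ*t) * Real.exp ((lam1-θ)*Z ω)
      + Real.exp (-θ'*(1+δ)*t) * Real.exp ((lam1+θ')*Z ω) with hg
  have hIntg : Integrable g P := (hIntB.const_mul _).add (hIntC.const_mul _)
  have hpt : ∀ ω ∈ Smᶜ, Real.exp (lam1 * Z ω) ≤ g ω := by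
    intro ω hω
    rw [hSmdef, compl_inter, mem_union, mem_compl_iff, mem_compl_iff,
      mem_setOf_eq, mem_setOf_eq, not_le, not_lt] at hω
    rcases hω with hlt | hge
    · have h1 : Real.exp (lam1 * Z ω) ≤ Real.exp (θ*t) * Real.exp ((lam1-θ)*Z ω) := by
        rw [← Real.exp_add]
        apply Real.exp_le_exp.2
        nlinarith [hθ.1, hlt.le]
      exact h1.trans (le_add_of_nonneg_right (by positivity))
    · have h1 : Real.exp (lam1 * Z ω) ≤ Real.exp (-θ'*(1+δ)*t) * Real.exp ((lam1+θ')*Z ω) := by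
        rw [← Real.exp_add]
        apply Real.exp_le_exp.2
        nlinarith [hθ', hge]
      exact h1.trans (le_add_of_nonneg_left (by positivity))
  have h1 : ∫ ω in Smᶜ, Real.exp (lam1 * Z ω) ∂P ≤ ∫ ω in Smᶜ, g ω ∂P :=
    setIntegral_mono_on hIntA.integrableOn hIntg.integrableOn hSm.compl hpt
  have h2 : ∫ ω in Smᶜ, g ω ∂P ≤ ∫ ω, g ω ∂P :=
    setIntegral_le_integral hIntg (Filter.Eventually.of_forall fun ω => by positivity)
  have h3 : ∫ ω, g ω ∂P
      = Real.exp (θ*t) * ∫ ω, Real.exp ((lam1-θ)*Z ω) ∂P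
        + Real.exp (-θ'*(1+δ)*t) * ∫ ω, Real.exp ((lam1+θ')*Z ω) ∂P := by
    rw [hg, integral_add (hIntB.const_mul _) (hIntC.const_mul _),
      MeasureTheory.integral_const_mul, MeasureTheory.integral_const_mul]
  have h4 : (∫ ω in Sm, Real.exp (lam1 * Z ω) ∂P) + ∫ ω in Smᶜ, Real.exp (lam1 * Z ω) ∂P = A :=
    integral_add_compl hSm hIntA
  have hmid : A/2 ≤ ∫ ω in Sm, Real.exp (lam1 * Z ω) ∂P := by linarith
  have h5 : ∫ ω in Sm, Real.exp (lam1 * Z ω) ∂P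
      ≤ ∫ _ω in Sm, Real.exp (lam1*(1+δ)*t) ∂P := by
    apply setIntegral_mono_on hIntA.integrableOn
      (integrable_const _).integrableOn hSm
    intro ω hω
    apply Real.exp_le_exp.2
    calc lam1 * Z ω ≤ lam1 * ((1+δ)*t) := mul_le_mul_of_nonneg_left hω.2.le hlam1.le
      _ = lam1*(1+δ)*t := by ring
  have h6 : ∫ _ω in Sm, Real.exp (lam1*(1+δ)*t) ∂P = (P Sm).toReal * Real.exp (lam1*(1+δ)*t) := by
    rw [setIntegral_const, smul_eq_mul, measureReal_def]
  have hPmono : (P Sm).toReal ≤ (P {ω | t ≤ Z ω}).toReal :=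
    ENNReal.toReal_mono (measure_ne_top P _) (measure_mono inter_subset_left)
  have hexp : (0:ℝ) < Real.exp (lam1*(1+δ)*t) := Real.exp_pos _
  nlinarith [hmid, h5, h6, hPmono, hexp]

lemma aux_core (P : Measure Ω) [IsProbabilityMeasure P] {c q V L : ℝ}
    (hc : 0 < c) (hq : 1 < q)
    (hLdef : L = (1/(c*q)) ^ (1/(q-1))) (hV : V = L - c * L ^ q)
    (Z : ℝ → Ω → ℝ) (hZm : ∀ t, Measurable (Z t))
    (hmgf : ∀ lam : ℝ, 0 < lam →
      Tendsto (fun t : ℝ => (1/t) * Real.log (∫ ω, Real.exp (lam * Z t ω) ∂P))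
        atTop (nhds (c * lam ^ q))) :
    Tendsto (fun t : ℝ => (1/t) * Real.log (P {ω | t ≤ Z t ω}).toReal)
      atTop (nhds (-V)) := by
  have hq0 : 0 < q := by linarith
  have hcq : 0 < c * q := by positivity
  have hLpos : 0 < L := by rw [hLdef]; positivity
  have hkey : c * L ^ (q-1) = 1/q := by
    rw [hLdef, ← Real.rpow_mul (by positivity), one_div (q-1),
      inv_mul_cancel₀ (by linarith : q - 1 ≠ 0), Real.rpow_one]
    field_simp
  have hLq : c * L ^ q = L / q := by
    have h1 : L ^ q = L ^ (q-1) * L := by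
      rw [← Real.rpow_add_one hLpos.ne' (q-1)]; ring_nf
    rw [h1, ← mul_assoc, hkey]; ring
  have hVpos : 0 < V := by
    rw [hV, hLq]
    rw [sub_pos, div_lt_iff₀ hq0]
    nlinarith
  -- lower bound, main work
  have hlow : ∀ ε : ℝ, 0 < ε → ∀ᶠ t : ℝ in atTop,
      0 < (P {ω | t ≤ Z t ω}).toReal ∧
      -V - ε < (1/t) * Real.log (P {ω | t ≤ Z t ω}).toReal := by
    intro ε hε
    -- choose s > 1 via continuity
    have c1 : ContinuousAt (fun s : ℝ => s ^ (q-1)) 1 :=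
      Real.continuousAt_rpow_const 1 _ (Or.inl one_ne_zero)
    have c2 : ContinuousAt (fun s : ℝ => s ^ q) 1 :=
      Real.continuousAt_rpow_const 1 _ (Or.inl one_ne_zero)
    have hgcont : ContinuousAt
        (fun s : ℝ => L * s * (2 * s^(q-1) - 1) - c * L^q * s^q) 1 :=
      (((continuousAt_const.mul continuousAt_id).mul
        ((continuousAt_const.mul c1).sub continuousAt_const)).sub
        (continuousAt_const.mul c2))
    have hgt := hgcont.tendsto
    rw [show (L * 1 * (2 * (1:ℝ)^(q-1) - 1) - c * L^q * 1^q) = V by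
      simp only [Real.one_rpow, mul_one]; rw [hV]; ring] at hgt
    have hev : ∀ᶠ s in nhdsWithin (1:ℝ) (Ioi 1),
        (L * s * (2 * s^(q-1) - 1) - c * L^q * s^q < V + ε/2) ∧ 1 < s := by
      refine Filter.Eventually.and ?_ ?_
      · exact (hgt.mono_left nhdsWithin_le_nhds).eventually
          (eventually_lt_nhds (by linarith))
      · exact eventually_mem_nhdsWithin
    obtain ⟨s, hgs, hs1⟩ := hev.exists
    have hs0 : 0 < s := by linarith
    set lam1 := L * s with hlam1def
    have hlam1 : 0 < lam1 := mul_pos hLpos hs0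
    set r := s ^ (q-1) with hrdef
    have hr1 : 1 < r := by
      rw [hrdef]
      rw [Real.one_lt_rpow_iff_of_pos hs0]
      exact Or.inl ⟨hs1, by linarith⟩
    set δ := 2*(r - 1) with hδdef
    have hδ : 0 < δ := by rw [hδdef]; linarith
    have hd1 : c * q * lam1 ^ (q-1) = r := by
      rw [hlam1def, Real.mul_rpow hLpos.le hs0.le, ← hrdef]
      have h2 : c * q * (L ^ (q-1) * r) = (c * L ^ (q-1)) * q * r := by ring
      rw [h2, hkey]
      field_simp
    have hobj : lam1 * (1+δ) - c * lam1 ^ q < V + ε/2 := by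
      have h1 : lam1 ^ q = L^q * s^q := Real.mul_rpow hLpos.le hs0.le
      have h2 : lam1 * (1+δ) = L * s * (2*r - 1) := by rw [hδdef, hlam1def]; ring
      rw [h1, h2, ← mul_assoc]
      exact hgs
    clear_value lam1 r δ
    -- θ existence
    obtain ⟨θ, hθmem, hθpos⟩ : ∃ θ ∈ Ioo (0:ℝ) lam1,
        0 < c * lam1^q - c * (lam1 - θ)^q - θ := by
      refine aux_slope (f' := r - 1) ?_ (by simp) (by linarith) hlam1
      have h0 : HasDerivAt (fun θ : ℝ => lam1 - θ) (-1) 0 :=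
        (hasDerivAt_id (0:ℝ)).const_sub lam1
      have h1 : HasDerivAt (fun θ : ℝ => (lam1 - θ)^q)
          ((-1) * q * (lam1 - 0)^(q-1)) 0 :=
        h0.rpow_const (Or.inl (by simpa using hlam1.ne'))
      have h3 := ((hasDerivAt_const (0:ℝ) (c * lam1 ^ q)).sub (h1.const_mul c)).sub
        (hasDerivAt_id (0:ℝ))
      refine h3.congr_deriv ?_
      ring_nf
      ring_nf at hd1
      linarith [hd1]
    obtain ⟨θ', hθ'mem, hθ'pos⟩ : ∃ θ' ∈ Ioo (0:ℝ) 1,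
        0 < (1+δ)*θ' - (c * (lam1 + θ')^q - c * lam1^q) := by
      refine aux_slope (f' := r - 1) ?_ (by simp) (by linarith) one_pos
      have h0 : HasDerivAt (fun θ : ℝ => lam1 + θ) 1 0 :=
        (hasDerivAt_id (0:ℝ)).const_add lam1
      have h1 : HasDerivAt (fun θ : ℝ => (lam1 + θ)^q)
          (1 * q * (lam1 + 0)^(q-1)) 0 :=
        h0.rpow_const (Or.inl (by simpa using hlam1.ne'))
      have h3 := ((hasDerivAt_id (0:ℝ)).const_mul (1+δ)).sub
        ((h1.const_mul c).sub (hasDerivAt_const (0:ℝ) (c * lam1 ^ q)))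
      refine h3.congr_deriv ?_
      ring_nf
      ring_nf at hd1
      linarith [hd1]
    have hθ'pos' : 0 < θ' := hθ'mem.1
    have hlamθ : 0 < lam1 - θ := by linarith [hθmem.2]
    have hlamθ' : 0 < lam1 + θ' := by linarith [hθ'mem.1]
    set a := c * lam1 ^ q with hadef
    set b := θ + c * (lam1 - θ)^q with hbdef
    set b2 := -θ'*(1+δ) + c * (lam1 + θ')^q with hb2def
    have hba : b < a := by rw [hbdef, hadef]; linarith [hθpos]
    have hb2a : b2 < a := by rw [hb2def, hadef]; linarith [hθ'pos]
    set κ := min (a - b) (a - b2) with hκdef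
    have hκ : 0 < κ := lt_min (by linarith) (by linarith)
    set η := min (κ/4) (ε/8) with hηdef
    have hη : 0 < η := lt_min (by linarith) (by linarith)
    have hηκ : η ≤ κ/4 := min_le_left _ _
    have hηε : η ≤ ε/8 := min_le_right _ _
    have hκab : κ ≤ a - b := min_le_left _ _
    have hκab2 : κ ≤ a - b2 := min_le_right _ _
    clear_value a b b2 κ η
    have hm1 := hmgf lam1 hlam1
    have hm2 := hmgf _ hlamθ
    have hm3 := hmgf _ hlamθ'
    have e1 := Metric.tendsto_nhds.mp hm1 η hη
    have e2 := Metric.tendsto_nhds.mp hm2 η hη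
    have e3 := Metric.tendsto_nhds.mp hm3 η hη
    have e4 := aux_int P hc Z hlam1 hm1
    have e5 := aux_int P hc Z hlamθ hm2
    have e6 := aux_int P hc Z hlamθ' hm3
    have h2t : Tendsto (fun t : ℝ => (1/t) * Real.log 2) atTop (nhds 0) := by
      have h := tendsto_inv_atTop_zero.mul_const (Real.log 2)
      rw [zero_mul] at h
      simpa [one_div] using h
    have e7 := h2t.eventually (eventually_lt_nhds (show (0:ℝ) < ε/8 by linarith))
    have e8 : ∀ᶠ t : ℝ in atTop, Real.log 4 ≤ t * (κ/2) := by
      have h : Tendsto (fun t : ℝ => t * (κ/2)) atTop atTop :=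
        Tendsto.atTop_mul_const (by linarith) tendsto_id
      exact h.eventually_ge_atTop _
    filter_upwards [e1, e2, e3, e4, e5, e6, e7, e8, eventually_gt_atTop (0:ℝ)]
      with t h1 h2 h3 h4 h5 h6 h7 h8 ht
    obtain ⟨hIA, hA1⟩ := h4
    obtain ⟨hIB, hB1⟩ := h5
    obtain ⟨hIC, hC1⟩ := h6
    set A := ∫ ω, Real.exp (lam1 * Z t ω) ∂P with hAdef
    set B := ∫ ω, Real.exp ((lam1-θ) * Z t ω) ∂P with hBdef2
    set C := ∫ ω, Real.exp ((lam1+θ') * Z t ω) ∂P with hCdef2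
    clear_value A B C
    have hApos : 0 < A := by linarith
    have hBpos : 0 < B := by linarith
    have hCpos : 0 < C := by linarith
    rw [Real.dist_eq] at h1 h2 h3
    have h1' := abs_lt.mp h1
    have h2' := abs_lt.mp h2
    have h3' := abs_lt.mp h3
    have hAlog : (a - η) * t ≤ Real.log A := by
      have hft : a - η < (1/t) * Real.log A := by linarith [h1'.1]
      calc (a - η) * t ≤ ((1/t) * Real.log A) * t :=
            mul_le_mul_of_nonneg_right hft.le ht.le
        _ = Real.log A := by field_simp
    have hBlog : Real.log B ≤ (c * (lam1-θ)^q + η) * t := by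
      have hft : (1/t) * Real.log B < c * (lam1-θ)^q + η := by linarith [h2'.2]
      calc Real.log B = ((1/t) * Real.log B) * t := by field_simp
        _ ≤ (c * (lam1-θ)^q + η) * t := mul_le_mul_of_nonneg_right hft.le ht.le
    have hClog : Real.log C ≤ (c * (lam1+θ')^q + η) * t := by
      have hft : (1/t) * Real.log C < c * (lam1+θ')^q + η := by linarith [h3'.2]
      calc Real.log C = ((1/t) * Real.log C) * t := by field_simp
        _ ≤ (c * (lam1+θ')^q + η) * t := mul_le_mul_of_nonneg_right hft.le ht.le
    have hBsmall : Real.exp (θ*t) * B ≤ A/4 := by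
      rw [← Real.log_le_log_iff (by positivity) (by positivity),
        Real.log_mul (Real.exp_ne_zero _) hBpos.ne', Real.log_exp,
        Real.log_div hApos.ne' (by norm_num : (4:ℝ) ≠ 0)]
      have hk : κ/2 ≤ a - b - 2*η := by linarith [hηκ, hκab]
      have k2 : (κ/2)*t ≤ (a-b-2*η)*t := mul_le_mul_of_nonneg_right hk ht.le
      have k3 : Real.log 4 ≤ (a-b-2*η)*t := by
        have hcm : t * (κ/2) = (κ/2) * t := mul_comm _ _
        linarith [h8, k2]
      have hcomb : θ*t + (c*(lam1-θ)^q + η)*t = (b+η)*t := by rw [hbdef]; ring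
      have k5 : (b+η)*t + Real.log 4 ≤ (a-η)*t := by
        have hring : (b+η)*t + (a-b-2*η)*t = (a-η)*t := by ring
        linarith [k3]
      linarith [hAlog, hBlog, hcomb, k5]
    have hCsmall : Real.exp (-θ'*(1+δ)*t) * C ≤ A/4 := by
      rw [← Real.log_le_log_iff (by positivity) (by positivity),
        Real.log_mul (Real.exp_ne_zero _) hCpos.ne', Real.log_exp,
        Real.log_div hApos.ne' (by norm_num : (4:ℝ) ≠ 0)]
      have hk : κ/2 ≤ a - b2 - 2*η := by linarith [hηκ, hκab2]
      have k2 : (κ/2)*t ≤ (a-b2-2*η)*t := mul_le_mul_of_nonneg_right hk ht.le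
      have k3 : Real.log 4 ≤ (a-b2-2*η)*t := by
        have hcm : t * (κ/2) = (κ/2) * t := mul_comm _ _
        linarith [h8, k2]
      have hcomb : -θ'*(1+δ)*t + (c*(lam1+θ')^q + η)*t = (b2+η)*t := by rw [hb2def]; ring
      have k5 : (b2+η)*t + Real.log 4 ≤ (a-η)*t := by
        have hring : (b2+η)*t + (a-b2-2*η)*t = (a-η)*t := by ring
        linarith [k3]
      linarith [hAlog, hClog, hcomb, k5]
    have hmain := aux_lower_t P (hZm t) hlam1 hθmem hθ'pos' hδ ht hIA hIB hIC
      (by rw [← hBdef2, ← hAdef]; exact hBsmall) (by rw [← hCdef2, ← hAdef]; exact hCsmall)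
    rw [← hAdef] at hmain
    set p := (P {ω | t ≤ Z t ω}).toReal with hpdef
    clear_value p
    have hexp := Real.exp_pos (lam1*(1+δ)*t)
    have hppos : 0 < p := by
      by_contra hcon
      push_neg at hcon
      have : Real.exp (lam1*(1+δ)*t) * p ≤ 0 := mul_nonpos_of_nonneg_of_nonpos hexp.le hcon
      linarith [hmain, hApos]
    refine ⟨hppos, ?_⟩
    have hplog : Real.log A - Real.log 2 - lam1*(1+δ)*t ≤ Real.log p := by
      have hball : A/2/Real.exp (lam1*(1+δ)*t) ≤ p := by
        rw [div_le_iff₀ hexp]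
        calc A/2 ≤ Real.exp (lam1*(1+δ)*t) * p := hmain
          _ = p * Real.exp (lam1*(1+δ)*t) := mul_comm _ _
      have hlog := Real.log_le_log (by positivity) hball
      rw [Real.log_div (by positivity : A/2 ≠ 0) (Real.exp_ne_zero _),
        Real.log_div hApos.ne' two_ne_zero, Real.log_exp] at hlog
      linarith
    have hstep : (1/t)*(Real.log A - Real.log 2 - lam1*(1+δ)*t) ≤ (1/t) * Real.log p :=
      mul_le_mul_of_nonneg_left hplog (by positivity)
    have hexpand : (1/t)*(Real.log A - Real.log 2 - lam1*(1+δ)*t)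
        = (1/t)*Real.log A - (1/t)*Real.log 2 - lam1*(1+δ) := by
      field_simp
    have hA' : a - η < (1/t)*Real.log A := by linarith [h1'.1]
    rw [hexpand] at hstep
    have hobj' : lam1 * (1+δ) - a < V + ε/2 := hobj
    linarith [hstep, hηε, h7, hA', hobj']
  -- conclusion
  rw [Metric.tendsto_nhds]
  intro ε hε
  have hup := hmgf L hLpos
  have e1 := hlow (ε/2) (by linarith)
  have e2 := hup.eventually (eventually_lt_nhds (show c*L^q < c*L^q + ε/2 by linarith))
  have e3 := aux_int P hc Z hLpos hup
  filter_upwards [e1, e2, e3, eventually_gt_atTop (0:ℝ)] with t h1 h2 h3 ht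
  obtain ⟨hP, hlo⟩ := h1
  obtain ⟨hIL, hL1⟩ := h3
  have hch := aux_chernoff P hLpos ht hIL hL1 hP
  rw [Real.dist_eq, abs_lt]
  constructor
  · linarith [hlo]
  · have : V = L - c * L ^ q := hV
    linarith [hch, h2]

end Aux

/-- Gärtner–Ellis / Legendre transform computation: from the limit of the normalized
log-moment generating functions of `|Y_t|^{1/2}` one deduces the large deviation rate of
`P(|Y_t| ≥ t²)`, given explicitly by the Legendre transform. -/
theorem stmt16 {Ω : Type*} [MeasurableSpace Ω] (P : Measure Ω) [IsProbabilityMeasure P]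
    (d : ℕ) (hd : 1 ≤ d) (β M : ℝ) (hβl : (d:ℝ)/2 < β) (hβu : β ≤ (d:ℝ)) (hM : 0 < M)
    (Y : ℝ → Ω → ℝ) (hmeas : ∀ t, Measurable (Y t))
    (hmgf : ∀ lam : ℝ, 0 < lam →
      Filter.Tendsto
        (fun t : ℝ => (1/t) * Real.log (∫ ω, Real.exp (lam * |Y t ω| ^ ((1:ℝ)/2)) ∂P))
        Filter.atTop
        (nhds ((lam / Real.sqrt 2) ^ (2 * β / (2 * β - (d:ℝ))) * M))) :
    (⨆ lam : Set.Ioi (0:ℝ),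
        ((lam:ℝ) - ((lam:ℝ) / Real.sqrt 2) ^ (2 * β / (2 * β - (d:ℝ))) * M))
      = 2 ^ (β/(d:ℝ) - 1) * ((d:ℝ)/β) *
          ((2 * β - (d:ℝ)) / (2 * β * M)) ^ ((2 * β - (d:ℝ))/(d:ℝ)) ∧
    Filter.Tendsto (fun t : ℝ => (1/t) * Real.log (P {ω | t ^ 2 ≤ |Y t ω|}).toReal)
      Filter.atTop
      (nhds (-(2 ^ (β/(d:ℝ) - 1) * ((d:ℝ)/β) *
        ((2 * β - (d:ℝ)) / (2 * β * M)) ^ ((2 * β - (d:ℝ))/(d:ℝ))))) := by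
  have hD : (0:ℝ) < (d:ℝ) := by exact_mod_cast Nat.lt_of_lt_of_le Nat.zero_lt_one hd
  set q : ℝ := 2 * β / (2 * β - (d:ℝ)) with hqdef
  have hβ : 0 < β := by linarith
  have hT : 0 < 2*β - (d:ℝ) := by linarith
  have hq1 : 1 < q := by rw [hqdef, lt_div_iff₀ hT]; linarith
  have hs2 : (0:ℝ) < Real.sqrt 2 := Real.sqrt_pos.2 (by norm_num)
  set c : ℝ := M / Real.sqrt 2 ^ q with hcdef
  have hc : 0 < c := by rw [hcdef]; positivity
  have hcq : 0 < c * q := by positivity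
  set L : ℝ := (1/(c*q)) ^ (1/(q-1)) with hLdef
  have hLpos : 0 < L := by rw [hLdef]; positivity
  have hkey : c * L ^ (q-1) = 1/q := by
    rw [hLdef, ← Real.rpow_mul (by positivity), one_div (q-1),
      inv_mul_cancel₀ (by linarith : q - 1 ≠ 0), Real.rpow_one]
    field_simp
  have hval : L - c * L ^ q
      = 2 ^ (β/(d:ℝ) - 1) * ((d:ℝ)/β) *
        ((2 * β - (d:ℝ)) / (2 * β * M)) ^ ((2 * β - (d:ℝ))/(d:ℝ)) :=
    aux_legendre_value hD hβl hM hqdef hcdef hLdef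
  have hconv : ∀ x : ℝ, 0 ≤ x → x - (x / Real.sqrt 2) ^ q * M = x - c * x ^ q := by
    intro x hx
    rw [Real.div_rpow hx (Real.sqrt_nonneg 2), hcdef]
    ring
  have hbound := aux_legendre_bound hc hq1 hLpos hkey
  constructor
  · -- the supremum
    haveI : Nonempty (Set.Ioi (0:ℝ)) := ⟨⟨1, Set.mem_Ioi.mpr one_pos⟩⟩
    apply le_antisymm
    · apply ciSup_le
      rintro ⟨x, hx⟩
      have hx' : 0 < x := hx
      rw [← hval]
      calc x - (x / Real.sqrt 2) ^ q * M = x - c * x ^ q := hconv x hx'.le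
        _ ≤ L - c * L ^ q := hbound x hx'
    · have hBdd : BddAbove (Set.range fun lam : Set.Ioi (0:ℝ) =>
          ((lam:ℝ) - ((lam:ℝ) / Real.sqrt 2) ^ q * M)) := by
        refine ⟨L - c * L ^ q, ?_⟩
        rintro _ ⟨⟨x, hx⟩, rfl⟩
        have hx' : 0 < x := hx
        calc x - (x / Real.sqrt 2) ^ q * M = x - c * x ^ q := hconv x hx'.le
          _ ≤ L - c * L ^ q := hbound x hx'
      have hle := le_ciSup hBdd ⟨L, Set.mem_Ioi.mpr hLpos⟩
      rw [← hval]
      calc L - c * L ^ q = L - (L / Real.sqrt 2) ^ q * M := (hconv L hLpos.le).symm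
        _ ≤ _ := hle
  · -- the limit
    rw [← hval]
    set Z : ℝ → Ω → ℝ := fun t ω => |Y t ω| ^ ((1:ℝ)/2) with hZdef
    have hZm : ∀ t, Measurable (Z t) := by
      intro t
      have : Z t = fun ω => Real.sqrt |Y t ω| := by
        funext ω
        rw [hZdef, Real.sqrt_eq_rpow]
      rw [this]
      exact Real.continuous_sqrt.measurable.comp (hmeas t).abs
    have hmgf' : ∀ lam : ℝ, 0 < lam →
        Filter.Tendsto (fun t : ℝ => (1/t) * Real.log (∫ ω, Real.exp (lam * Z t ω) ∂P))
          Filter.atTop (nhds (c * lam ^ q)) := by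
      intro lam hlam
      have h := hmgf lam hlam
      have heq : (lam / Real.sqrt 2) ^ q * M = c * lam ^ q := by
        have := hconv lam hlam.le
        linarith
      rw [heq] at h
      exact h
    have hcore := aux_core P hc hq1 hLdef rfl Z hZm hmgf'
    apply hcore.congr'
    filter_upwards [eventually_gt_atTop (0:ℝ)] with t ht
    have hset : {ω | t ^ 2 ≤ |Y t ω|} = {ω | t ≤ Z t ω} := by
      ext ω
      simp only [Set.mem_setOf_eq, hZdef]
      rw [← Real.sqrt_eq_rpow]
      exact (Real.le_sqrt' ht).symm
    rw [hset]
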